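/- arXiv:2407.12332 — 7 statements merged into one kernel-verified Lean document; each statement's English description precedes it below -/
import Mathlib

section
/- For any symmetric positive semi-definite matrix Σ in ℝ^{d×d}, any subspace V of ℝ^d with orthogonal projection matrix P_V, and any n ≥ 0, it holds that Σ_{i=1}^n λ_i(Σ) ≤ n·λ_1((I − P_V)Σ(I − P_V)) + Tr(P_V Σ P_V), where λ_i denotes the i-th largest eigenvalue. -/
/-!
Let `λᵢ, vᵢ` be the eigenpairs of `Σ`, `Q = I - P`, and split `λᵢ = λᵢ⟨vᵢ, P vᵢ⟩ + λᵢ⟨vᵢ, Q vᵢ⟩`.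
The first parts are nonnegative and sum, over all `i`, to `Tr(Σ P) = Tr(P Σ P)`. For the second,
positivity of `Σ` tested on `Q vᵢ - ⟨vᵢ, Q vᵢ⟩ vᵢ` gives
`λᵢ⟨vᵢ, Q vᵢ⟩² ≤ ⟨Q vᵢ, Σ Q vᵢ⟩ ≤ λ₁(QΣQ)⟨vᵢ, Q vᵢ⟩`, so each second part is at most `λ₁(QΣQ)`.
-/

open Matrix

namespace Matrix

variable {ι : Type*} [Fintype ι]

theorem trace_eq_sum_dotProduct_mulVec (M : Matrix ι ι ℝ)
    (b : OrthonormalBasis ι ℝ (EuclideanSpace ℝ ι)) :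
    M.trace = ∑ i, ⇑(b i) ⬝ᵥ M *ᵥ ⇑(b i) := by
  classical
  have h := LinearMap.trace_eq_sum_inner (toLpLin 2 2 M) b
  rw [toLpLin_eq_toLin, LinearMap.trace_eq_matrix_trace ℝ (PiLp.basisFun 2 ℝ ι),
    LinearMap.toMatrix_toLin] at h
  rw [h]
  refine Finset.sum_congr rfl fun i _ => ?_
  rw [EuclideanSpace.inner_eq_star_dotProduct, star_trivial, dotProduct_comm,
    ← toLpLin_eq_toLin, ofLp_toLpLin]
  rfl

theorem _root_.OrthonormalBasis.dotProduct_self (b : OrthonormalBasis ι ℝ (EuclideanSpace ℝ ι))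
    (i : ι) : ⇑(b i) ⬝ᵥ ⇑(b i) = 1 := by
  have h := real_inner_self_eq_norm_sq (b i)
  rwa [b.orthonormal.1 i, one_pow, EuclideanSpace.inner_eq_star_dotProduct, star_trivial] at h

theorem dotProduct_mulVec_eq_of_idempotent {Q : Matrix ι ι ℝ} (hQ : Q * Q = Q) (hQt : Qᵀ = Q)
    (v : ι → ℝ) : v ⬝ᵥ Q *ᵥ v = Q *ᵥ v ⬝ᵥ Q *ᵥ v := by
  conv_lhs => rw [← hQ, ← mulVec_mulVec]
  rw [dotProduct_mulVec, ← mulVec_transpose, hQt]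

theorem PosSemidef.mul_mul_of_transpose_eq {A Q : Matrix ι ι ℝ} (hA : A.PosSemidef)
    (hQt : Qᵀ = Q) : (Q * A * Q).PosSemidef := by
  simpa only [conjTranspose_eq_transpose_of_trivial, hQt] using hA.mul_mul_conjTranspose_same Q

theorem PosSemidef.eigenvalue_mul_sq_dotProduct_le {A : Matrix ι ι ℝ} (hA : A.PosSemidef)
    {μ : ℝ} {v : ι → ℝ} (hv : A *ᵥ v = μ • v) (hv1 : v ⬝ᵥ v = 1) (x : ι → ℝ) :
    μ * (v ⬝ᵥ x) ^ 2 ≤ x ⬝ᵥ A *ᵥ x := by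
  have hAt : Aᵀ = A := by
    simpa only [conjTranspose_eq_transpose_of_trivial] using hA.isHermitian.eq
  have hvx : v ⬝ᵥ A *ᵥ x = μ * (v ⬝ᵥ x) := by
    rw [dotProduct_mulVec, ← mulVec_transpose, hAt, hv, smul_dotProduct, smul_eq_mul]
  have h := hA.dotProduct_mulVec_nonneg (x - (v ⬝ᵥ x) • v)
  simp only [star_trivial, mulVec_sub, mulVec_smul, hv, dotProduct_sub, sub_dotProduct,
    dotProduct_smul, smul_dotProduct, smul_eq_mul, hv1, dotProduct_comm x v] at h
  rw [hvx] at h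
  nlinarith

variable [DecidableEq ι]

theorem PosSemidef.iSup_eigenvalues_nonneg {A : Matrix ι ι ℝ} (hA : A.PosSemidef) :
    0 ≤ ⨆ i, hA.isHermitian.eigenvalues i :=
  Real.iSup_nonneg hA.eigenvalues_nonneg

theorem IsHermitian.trace_mul_eq_sum_eigenvalues_mul {A : Matrix ι ι ℝ} (hA : A.IsHermitian)
    (B : Matrix ι ι ℝ) :
    (B * A).trace =
      ∑ i, hA.eigenvalues i * (⇑(hA.eigenvectorBasis i) ⬝ᵥ B *ᵥ ⇑(hA.eigenvectorBasis i)) := by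
  rw [trace_eq_sum_dotProduct_mulVec _ hA.eigenvectorBasis]
  refine Finset.sum_congr rfl fun i _ => ?_
  rw [← mulVec_mulVec, hA.mulVec_eigenvectorBasis, mulVec_smul, dotProduct_smul, smul_eq_mul]

theorem IsHermitian.posSemidef_iSup_eigenvalues_smul_one_sub {A : Matrix ι ι ℝ}
    (hA : A.IsHermitian) : ((⨆ i, hA.eigenvalues i) • (1 : Matrix ι ι ℝ) - A).PosSemidef := by
  open scoped MatrixOrder in
  rw [← le_iff, ← Algebra.algebraMap_eq_smul_one]
  refine le_algebraMap_of_spectrum_le (fun x hx => ?_) hA.isSelfAdjoint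
  obtain ⟨i, rfl⟩ := hA.spectrum_real_eq_range_eigenvalues ▸ hx
  exact le_ciSup (Set.finite_range _).bddAbove i

theorem IsHermitian.dotProduct_mulVec_le_iSup_eigenvalues_mul {A : Matrix ι ι ℝ}
    (hA : A.IsHermitian) (x : ι → ℝ) : x ⬝ᵥ A *ᵥ x ≤ (⨆ i, hA.eigenvalues i) * (x ⬝ᵥ x) := by
  have h := hA.posSemidef_iSup_eigenvalues_smul_one_sub.dotProduct_mulVec_nonneg x
  rw [star_trivial, sub_mulVec, smul_mulVec, one_mulVec, dotProduct_sub, dotProduct_smul,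
    smul_eq_mul] at h
  linarith

theorem PosSemidef.eigenvalue_mul_dotProduct_le_iSup_eigenvalues {A Q : Matrix ι ι ℝ}
    (hA : A.PosSemidef) (hQ : Q * Q = Q) (hQt : Qᵀ = Q) (hM : (Q * A * Q).IsHermitian)
    {μ : ℝ} {v : ι → ℝ} (hv : A *ᵥ v = μ • v) (hv1 : v ⬝ᵥ v = 1) :
    μ * (v ⬝ᵥ Q *ᵥ v) ≤ ⨆ i, hM.eigenvalues i := by
  set x := Q *ᵥ v
  set q := v ⬝ᵥ x
  have hqx : q = x ⬝ᵥ x := dotProduct_mulVec_eq_of_idempotent hQ hQt v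
  have hQx : Q *ᵥ x = x := by rw [mulVec_mulVec, hQ]
  have hcompress : x ⬝ᵥ A *ᵥ x = x ⬝ᵥ (Q * A * Q) *ᵥ x := by
    rw [← mulVec_mulVec, ← mulVec_mulVec, hQx, dotProduct_mulVec x Q, ← mulVec_transpose, hQt,
      hQx]
  have hsq : μ * q ^ 2 ≤ (⨆ i, hM.eigenvalues i) * q :=
    calc μ * q ^ 2 ≤ x ⬝ᵥ A *ᵥ x := hA.eigenvalue_mul_sq_dotProduct_le hv hv1 x
      _ = x ⬝ᵥ (Q * A * Q) *ᵥ x := hcompress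
      _ ≤ _ := hqx ▸ hM.dotProduct_mulVec_le_iSup_eigenvalues_mul x
  rcases (hqx ▸ dotProduct_self_star_nonneg x : 0 ≤ q).eq_or_lt with hq | hq
  · rw [← hq, mul_zero]
    exact (hA.mul_mul_of_transpose_eq hQt).iSup_eigenvalues_nonneg
  · nlinarith

theorem PosSemidef.sum_eigenvalues_le {A P : Matrix ι ι ℝ} (hA : A.PosSemidef) (hP : P * P = P)
    (hPt : Pᵀ = P) (hM : ((1 - P) * A * (1 - P)).IsHermitian) {s : Finset ι} {n : ℕ}
    (hs : s.card ≤ n) :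
    ∑ i ∈ s, hA.isHermitian.eigenvalues i ≤ n * (⨆ i, hM.eigenvalues i) + (P * A * P).trace := by
  set c := ⨆ i, hM.eigenvalues i
  set b := hA.isHermitian.eigenvectorBasis
  set p : ι → ℝ := fun i => hA.isHermitian.eigenvalues i * (⇑(b i) ⬝ᵥ P *ᵥ ⇑(b i))
  have hQ : (1 - P) * (1 - P) = 1 - P := by
    rw [sub_mul, one_mul, mul_sub, mul_one, hP, sub_self, sub_zero]
  have hQt : (1 - P)ᵀ = 1 - P := by rw [transpose_sub, transpose_one, hPt]
  have hsplit (i : ι) : hA.isHermitian.eigenvalues i ≤ p i + c := by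
    have hq := hA.eigenvalue_mul_dotProduct_le_iSup_eigenvalues hQ hQt hM
      (hA.isHermitian.mulVec_eigenvectorBasis i) (b.dotProduct_self i)
    rw [sub_mulVec, one_mulVec, dotProduct_sub, b.dotProduct_self, mul_sub, mul_one] at hq
    linarith
  have hp (i : ι) : 0 ≤ p i :=
    mul_nonneg (hA.eigenvalues_nonneg i)
      (dotProduct_mulVec_eq_of_idempotent hP hPt _ ▸ dotProduct_self_star_nonneg _)
  have hc : 0 ≤ c := (hA.mul_mul_of_transpose_eq hQt).iSup_eigenvalues_nonneg
  have htrace : (P * A * P).trace = ∑ i, p i := by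
    rw [trace_mul_cycle, hP, hA.isHermitian.trace_mul_eq_sum_eigenvalues_mul]
  calc ∑ i ∈ s, hA.isHermitian.eigenvalues i
      ≤ ∑ i ∈ s, (p i + c) := Finset.sum_le_sum fun i _ => hsplit i
    _ = ∑ i ∈ s, p i + s.card * c := by
        rw [Finset.sum_add_distrib, Finset.sum_const, nsmul_eq_mul]
    _ ≤ ∑ i, p i + n * c := by
        gcongr
        · exact fun i _ _ => hp i
        · exact Finset.subset_univ s
    _ = n * c + (P * A * P).trace := by rw [htrace, add_comm]

end Matrix

theorem stmt6_general (d n : ℕ) (Sig P : Matrix (Fin d) (Fin d) ℝ)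
    (hpsd : Sig.PosSemidef) (hherm : Sig.IsHermitian)
    (hP : P * P = P) (hPt : Pᵀ = P)
    (hM : ((1 - P) * Sig * (1 - P)).IsHermitian)
    (es : Fin d → ℝ)
    (hperm : ∃ e : Equiv.Perm (Fin d), ∀ i, hherm.eigenvalues i = es (e i)) :
    ∑ i : Fin d, (if (i : ℕ) < n then es i else 0) ≤
      (n : ℝ) * (⨆ i, hM.eigenvalues i) + Matrix.trace (P * Sig * P) := by
  obtain ⟨e, he⟩ := hperm
  set top := Finset.univ.filter fun j : Fin d => (j : ℕ) < n
  have hsum : ∑ i : Fin d, (if (i : ℕ) < n then es i else 0) =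
      ∑ i ∈ top.map e.symm.toEmbedding, hherm.eigenvalues i := by
    rw [Finset.sum_map, ← Finset.sum_filter]
    simp [he, top]
  have hcard : (top.map e.symm.toEmbedding).card ≤ n := by
    rw [Finset.card_map, Fin.card_filter_val_lt]
    exact min_le_right d n
  rw [hsum]
  exact hpsd.sum_eigenvalues_le hP hPt hM hcard

/-- For a symmetric p.s.d. matrix `Sig` and an orthogonal projection `P`, the sum of
the `n` largest eigenvalues of `Sig` is at most
`n·λ₁((I−P)Sig(I−P)) + Tr(P Sig P)`. -/
theorem stmt6 (d n : ℕ) (Sig P : Matrix (Fin d) (Fin d) ℝ)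
    (hpsd : Sig.PosSemidef) (hherm : Sig.IsHermitian)
    (hP : P * P = P) (hPt : Pᵀ = P)
    (hM : ((1 - P) * Sig * (1 - P)).IsHermitian)
    (es : Fin d → ℝ) (hanti : Antitone es)
    (hperm : ∃ e : Equiv.Perm (Fin d), ∀ i, hherm.eigenvalues i = es (e i)) :
    ∑ i : Fin d, (if (i : ℕ) < n then es i else 0) ≤
      (n : ℝ) * (⨆ i, hM.eigenvalues i) + Matrix.trace (P * Sig * P) :=
  stmt6_general d n Sig P hpsd hherm hP hPt hM es hperm
end

section
/- Fix integers p ≥ 2 and m ≥ 1. For 0 ≤ d ≤ m define C_d = E_{σ_1,...,σ_m ∼ Unif(S_p)}[Ψ_σ(x)·Ψ_σ(x')] where (x, x') is any pair of index vectors in [p]^m differing in exactly d coordinates and Ψ_σ(x) = 1(Σ_{i=1}^m σ_i(x_i) ≡ 0 mod p). Then C_0 = 1/p and for all d ≥ 1, C_d = (1/p²)(1 − 1/(1−p)^{d−1}). -/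
/-!
Translating a single permutation `σ_{i₀}` by `y ↦ y + c` shifts both sums `∑ σ_i(x_i)` and
`∑ σ_i(x'_i)` by `c`, so they vanish simultaneously for exactly a `1/q`-th of the `σ` for
which they agree, i.e. for which `∑ (σ_i(x_i) - σ_i(x'_i)) = 0`. The summands of this
difference vanish where `x_i = x'_i` and are independent and uniform on the nonzero elements
where `x_i ≠ x'_i`, so the probability `P_d` that they add up to `0` satisfies `P_0 = 1`,
`P_{d+1} = (1 - P_d) / (q - 1)`, whence `q P_d = 1 + (q - 1) (-1 / (q - 1)) ^ d`.
-/

open Finset Equiv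
open scoped Nat

lemma card_filter_sum_eq_zero_fin_succ {A M : Type*} [Fintype A] [AddCommMonoid M] [DecidableEq M]
    {m : ℕ} (f : Fin (m + 1) → A → M) :
    #{σ : Fin (m + 1) → A | ∑ i, f i (σ i) = 0}
      = ∑ a, #{τ : Fin m → A | f 0 a + ∑ i, f i.succ (τ i) = 0} := by
  simp only [card_filter]
  rw [← Fintype.sum_prod_type']
  refine (Fintype.sum_equiv (Fin.consEquiv fun _ => A) _ _ fun aτ => ?_).symm
  simp [Fin.sum_univ_succ]

section Shift

variable {G : Type*} [AddCommGroup G] {ι : Type*} [Fintype ι] [DecidableEq ι]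

lemma sum_mulSingle_addRight_mul_apply (i₀ : ι) (c : G) (σ : ι → Perm G) (y : ι → G) :
    ∑ i, (Pi.mulSingle i₀ (Equiv.addRight c) * σ : ι → Perm G) i (y i)
      = ∑ i, σ i (y i) + c := by
  have h : ∀ i, (Pi.mulSingle i₀ (Equiv.addRight c) * σ : ι → Perm G) i (y i)
      = σ i (y i) + Pi.single (M := fun _ => G) i₀ c i := by
    intro i
    rcases eq_or_ne i i₀ with rfl | hi
    · simp
    · simp [hi]
  simp only [h, sum_add_distrib, Fintype.sum_pi_single']

variable [Fintype G] [DecidableEq G]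

lemma card_mul_card_sum_eq_zero_and_sum_eq_zero [Nonempty ι] (y z : ι → G) :
    Fintype.card G * #{σ : ι → Perm G | ∑ i, σ i (y i) = 0 ∧ ∑ i, σ i (z i) = 0}
      = #{σ : ι → Perm G | ∑ i, (σ i (y i) - σ i (z i)) = 0} := by
  obtain ⟨i₀⟩ := ‹Nonempty ι›
  symm
  rw [card_eq_sum_card_fiberwise (f := fun σ : ι → Perm G => ∑ i, σ i (y i)) (t := univ)
    (by simp), ← Finset.card_univ (α := G), ← smul_eq_mul, ← sum_const]
  refine sum_congr rfl fun c _ =>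
    (card_equiv (Equiv.mulLeft (Pi.mulSingle i₀ (Equiv.addRight c))) fun σ => ?_).symm
  simp only [mem_filter, mem_univ, true_and, coe_mulLeft, sum_sub_distrib,
    sum_mulSingle_addRight_mul_apply, add_eq_right, sub_eq_zero, add_left_inj]
  constructor
  · rintro ⟨hy, hz⟩; exact ⟨hy.trans hz.symm, hy⟩
  · rintro ⟨h, hy⟩; exact ⟨hy, h ▸ hy⟩

end Shift

section Differences

variable {G : Type*} [AddCommGroup G] [Fintype G] [DecidableEq G]

/- Composing with the transposition of `π b + e` and `π b + e'` fixes `π b` and moves `π a` from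
`π b + e` to `π b + e'`; this map is an involution of `Perm G`. -/
lemma card_perm_sub_eq_card_perm_sub {e e' : G} (he : e ≠ 0) (he' : e' ≠ 0) (a b : G) :
    #{π : Perm G | π a - π b = e} = #{π : Perm G | π a - π b = e'} := by
  have hfix : ∀ {e e' : G}, e ≠ 0 → e' ≠ 0 → ∀ π : Perm G,
      (swap (π b + e) (π b + e') * π) b = π b := fun he he' π =>
    swap_apply_of_ne_of_ne (by simpa using he) (by simpa using he')
  refine card_nbij' (fun π => swap (π b + e) (π b + e') * π)
    (fun π => swap (π b + e') (π b + e) * π) ?_ ?_ ?_ ?_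
  · intro π hπ
    simp only [coe_filter, Set.mem_ofPred_eq, mem_univ, true_and] at hπ ⊢
    rw [hfix he he', Perm.mul_apply, eq_add_of_sub_eq' hπ, swap_apply_left]
    abel
  · intro π hπ
    simp only [coe_filter, Set.mem_ofPred_eq, mem_univ, true_and] at hπ ⊢
    rw [hfix he' he, Perm.mul_apply, eq_add_of_sub_eq' hπ, swap_apply_left]
    abel
  · intro π _
    simp only [hfix he he', swap_comm (π b + e'), swap_mul_self_mul]
  · intro π _
    simp only [hfix he' he, swap_comm (π b + e), swap_mul_self_mul]

lemma card_sub_one_mul_card_perm_sub {a b : G} (hab : a ≠ b) {e : G} (he : e ≠ 0) :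
    (Fintype.card G - 1) * #{π : Perm G | π a - π b = e} = (Fintype.card G)! := by
  have htotal : (Fintype.card G)! = ∑ e', #{π : Perm G | π a - π b = e'} := by
    rw [← Fintype.card_perm, ← Finset.card_univ]
    exact card_eq_sum_card_fiberwise (by simp)
  have hzero : #{π : Perm G | π a - π b = 0} = 0 := by simp [sub_eq_zero, hab]
  rw [htotal, Fintype.sum_eq_add_sum_compl 0, hzero, zero_add,
    sum_congr rfl fun e' he' => card_perm_sub_eq_card_perm_sub (by simpa using he') he a b,
    sum_const, card_compl, card_singleton, smul_eq_mul]

lemma card_sub_one_mul_sum_card_perm_sub_add_eq_zero {a b : G} (hab : a ≠ b) {B : Type*}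
    [Fintype B] (g : B → G) :
    (Fintype.card G - 1) * ∑ π : Perm G, #{τ : B | π a - π b + g τ = 0}
      = (Fintype.card G)! * #{τ : B | g τ ≠ 0} := by
  have hswap := sum_card_bipartiteAbove_eq_sum_card_bipartiteBelow (s := univ) (t := univ)
    (r := fun (π : Perm G) τ => π a - π b + g τ = 0)
  simp only [bipartiteAbove, bipartiteBelow] at hswap
  rw [hswap, card_filter, mul_sum, mul_sum]
  refine sum_congr rfl fun τ _ => ?_
  by_cases hτ : g τ = 0
  · simp [hτ, sub_eq_zero, hab]
  · simp only [add_eq_zero_iff_eq_neg, if_pos hτ, mul_one]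
    exact card_sub_one_mul_card_perm_sub hab (neg_ne_zero.2 hτ)

theorem card_mul_pow_mul_card_sum_sub_eq_zero (m : ℕ) (x x' : Fin m → G) :
    (Fintype.card G : ℤ) * (Fintype.card G - 1) ^ #{i | x i ≠ x' i}
        * #{σ : Fin m → Perm G | ∑ i, (σ i (x i) - σ i (x' i)) = 0}
      = ((Fintype.card G)! : ℤ) ^ m * ((Fintype.card G - 1) ^ #{i | x i ≠ x' i}
        + (Fintype.card G - 1) * (-1) ^ #{i | x i ≠ x' i}) := by
  induction m with
  | zero => simp
  | succ m ih =>
    specialize ih (fun i => x i.succ) (fun i => x' i.succ)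
    rw [card_filter_sum_eq_zero_fin_succ (fun i (π : Perm G) => π (x i) - π (x' i)),
      Fin.card_filter_univ_succ']
    by_cases h0 : x 0 = x' 0
    · simp only [h0, sub_self, zero_add, sum_const, Finset.card_univ, Fintype.card_perm,
        smul_eq_mul, ne_eq, not_true_eq_false, if_false]
      push_cast
      linear_combination ((Fintype.card G)! : ℤ) * ih
    · let g (τ : Fin m → Perm G) : G := ∑ i, (τ i (x i.succ) - τ i (x' i.succ))
      have hrec := card_sub_one_mul_sum_card_perm_sub_add_eq_zero h0 g
      have hsplit : #{τ | g τ = 0} + #{τ | g τ ≠ 0} = (Fintype.card G)! ^ m := by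
        rw [card_filter_add_card_filter_not, Finset.card_univ, Fintype.card_fun,
          Fintype.card_perm, Fintype.card_fin]
      have hq : 1 ≤ Fintype.card G := Fintype.card_pos
      rw [if_pos h0]
      zify [hq] at hrec hsplit
      push_cast
      set q := Fintype.card G
      linear_combination (q : ℤ) * (q - 1) ^ #{i : Fin m | x i.succ ≠ x' i.succ}
        * (hrec + (q ! : ℤ) * hsplit) - (q ! : ℤ) * ih

theorem card_sum_eq_zero_and_sum_eq_zero_div {m : ℕ} (hm : 1 ≤ m) (hG : 2 ≤ Fintype.card G)
    {d : ℕ} (x x' : Fin m → G) (hdiff : #{i | x i ≠ x' i} = d) :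
    (#{σ : Fin m → Perm G | ∑ i, σ i (x i) = 0 ∧ ∑ i, σ i (x' i) = 0} : ℝ)
        / ((Fintype.card G)! : ℝ) ^ m
      = if d = 0 then 1 / (Fintype.card G : ℝ)
        else 1 / (Fintype.card G : ℝ) ^ 2 * (1 - 1 / (1 - (Fintype.card G : ℝ)) ^ (d - 1)) := by
  have : Nonempty (Fin m) := ⟨⟨0, hm⟩⟩
  set q := Fintype.card G
  set N := #{σ : Fin m → Perm G | ∑ i, σ i (x i) = 0 ∧ ∑ i, σ i (x' i) = 0}
  have hZ : (q : ℤ) ^ 2 * (q - 1) ^ d * N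
      = (q ! : ℤ) ^ m * ((q - 1) ^ d + (q - 1) * (-1) ^ d) := by
    rw [← hdiff, ← card_mul_pow_mul_card_sum_sub_eq_zero,
      ← card_mul_card_sum_eq_zero_and_sum_eq_zero]
    push_cast
    ring
  have hR : (q : ℝ) ^ 2 * (q - 1) ^ d * N
      = (q ! : ℝ) ^ m * ((q - 1) ^ d + (q - 1) * (-1) ^ d) := by
    exact_mod_cast hZ
  have hq : (2 : ℝ) ≤ q := by exact_mod_cast hG
  have hn : (q ! : ℝ) ^ m ≠ 0 := by positivity
  rcases d with _ | e
  · have hq0 : (q : ℝ) ≠ 0 := by positivity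
    simp only [pow_zero, mul_one, if_true] at hR ⊢
    rw [div_eq_div_iff hn hq0]
    exact mul_left_cancel₀ hq0 (by linear_combination hR)
  · have hq1 : (q : ℝ) - 1 ≠ 0 := by linarith
    have hR' : (q : ℝ) ^ 2 * (q - 1) ^ e * N = (q ! : ℝ) ^ m * ((q - 1) ^ e - (-1) ^ e) :=
      mul_left_cancel₀ hq1 (by linear_combination hR)
    have hsign : ((-1 : ℝ) ^ e) ^ 2 = 1 := by rw [← pow_mul, mul_comm, pow_mul]; simp
    rw [if_neg e.succ_ne_zero, Nat.add_sub_cancel, show (1 : ℝ) - q = -1 * (q - 1) by ring,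
      mul_pow]
    field_simp
    linear_combination (-1) ^ e * hR' - (q ! : ℝ) ^ m * hsign

end Differences

theorem stmt7_general (p m : ℕ) [NeZero p] (hp : 2 ≤ p) (hm : 1 ≤ m)
    (d : ℕ) (x x' : Fin m → ZMod p)
    (hdiff : (Finset.univ.filter (fun i => x i ≠ x' i)).card = d) :
    (∑ σ : Fin m → Equiv.Perm (ZMod p),
        (if (∑ i, σ i (x i)) = 0 then (1 : ℝ) else 0) *
        (if (∑ i, σ i (x' i)) = 0 then (1 : ℝ) else 0)) /
      (Fintype.card (Fin m → Equiv.Perm (ZMod p)) : ℝ) =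
    if d = 0 then 1 / (p : ℝ)
    else (1 / (p : ℝ) ^ 2) * (1 - 1 / (1 - (p : ℝ)) ^ (d - 1)) := by
  simp only [ite_zero_mul_ite_zero, mul_one]
  rw [sum_boole, Fintype.card_fun, Fintype.card_perm, ZMod.card, Fintype.card_fin]
  push_cast
  simpa only [ZMod.card] using
    card_sum_eq_zero_and_sum_eq_zero_div hm (by rwa [ZMod.card]) x x' hdiff

/-- Closed form for the correlation `C_d` of the modular-addition indicator under
independent uniform random permutations, for a pair of index vectors differing in
exactly `d` coordinates. -/
theorem stmt7 (p m : ℕ) [NeZero p] (hp : 2 ≤ p) (hm : 1 ≤ m)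
    (d : ℕ) (hd : d ≤ m) (x x' : Fin m → ZMod p)
    (hdiff : (Finset.univ.filter (fun i => x i ≠ x' i)).card = d) :
    (∑ σ : Fin m → Equiv.Perm (ZMod p),
        (if (∑ i, σ i (x i)) = 0 then (1 : ℝ) else 0) *
        (if (∑ i, σ i (x' i)) = 0 then (1 : ℝ) else 0)) /
      (Fintype.card (Fin m → Equiv.Perm (ZMod p)) : ℝ) =
    if d = 0 then 1 / (p : ℝ)
    else (1 / (p : ℝ) ^ 2) * (1 - 1 / (1 - (p : ℝ)) ^ (d - 1)) :=
  stmt7_general p m hp hm d x x' hdiff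
end

section
/- Fix integers p ≥ 2 and 1 ≤ m < p. For σ = (σ_1,...,σ_m) a tuple of permutations of [p], define Ψ_σ ∈ ℝ^{p^m} by Ψ_σ(x) = 1(Σ_{i=1}^m σ_i(x_i) ≡ 0 mod p). Then for any unit vector v ∈ ℝ^{p^m} orthogonal to V_s (the span of all slice indicator vectors s_{i,a}), E_{σ ∼ Unif(S_p)^m}[⟨Ψ_σ, v⟩²] ≤ (1/p)·exp((m−1)/(p−1)). -/
/-!
Expanding the square reduces the claim to the pair correlations `𝔼_σ Ψ_σ(x) Ψ_σ(y)`. Write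
`π(a, b) = 1(a = b) - 1/p` (`centeredDelta`), the kernel of the orthogonal projection onto
mean-zero functions. For one uniform permutation `g`,
`P(g u = a, g w = b) = 1/p² + π(u, w) π(a, b) / (p - 1)`, and convolving over the `m` coordinates
gives `𝔼_σ Ψ_σ(x) Ψ_σ(y) = 1/p² + p^(m-1) / (p-1)^m · π(0, 0) · ∏ᵢ π(xᵢ, yᵢ)`.
The constant part vanishes against `v`, which sums to zero because it is orthogonal to a slice;
the tensor kernel `∏ᵢ π(xᵢ, yᵢ)` is an orthogonal projection, so its quadratic form at the unit
vector `v` is at most `1`. What remains is `(1/p) (1 + 1/(p-1))^(m-1) ≤ (1/p) exp ((m-1)/(p-1))`.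
-/

open Finset
open scoped BigOperators

section CenteredDelta
variable {β : Type*} [Fintype β] [DecidableEq β]

noncomputable def centeredDelta (a b : β) : ℝ :=
  (if a = b then 1 else 0) - (Fintype.card β : ℝ)⁻¹

lemma centeredDelta_comm (a b : β) : centeredDelta a b = centeredDelta b a := by
  simp only [centeredDelta, eq_comm]

lemma centeredDelta_self (a : β) : centeredDelta a a = 1 - (Fintype.card β : ℝ)⁻¹ := by
  simp [centeredDelta]

lemma sum_centeredDelta_right [Nonempty β] (a : β) : ∑ b, centeredDelta a b = 0 := by
  simp [centeredDelta, sum_sub_distrib]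

lemma sum_centeredDelta_mul_centeredDelta [Nonempty β] (a b : β) :
    ∑ t, centeredDelta a t * centeredDelta t b = centeredDelta a b := by
  simp [centeredDelta, sub_mul, mul_sub, sum_sub_distrib]

lemma sum_prod_centeredDelta_mul_prod_centeredDelta [Nonempty β] {ι : Type*} [Fintype ι]
    [DecidableEq ι] (x y : ι → β) :
    ∑ z : ι → β, (∏ i, centeredDelta (x i) (z i)) * ∏ i, centeredDelta (z i) (y i) =
      ∏ i, centeredDelta (x i) (y i) := by
  simp_rw [← prod_mul_distrib]
  rw [← Fintype.prod_sum (fun i t => centeredDelta (x i) t * centeredDelta t (y i))]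
  simp_rw [sum_centeredDelta_mul_centeredDelta]

end CenteredDelta

lemma sum_sum_mul_mul_le_sum_sq {α : Type*} [Fintype α] (K : α → α → ℝ)
    (hK : ∀ x y, K x y = K y x) (hKK : ∀ x y, ∑ z, K x z * K z y = K x y) (v : α → ℝ) :
    ∑ x, ∑ y, v x * v y * K x y ≤ ∑ x, v x ^ 2 := by
  set w : α → ℝ := fun x => ∑ y, K x y * v y
  have hvw : ∑ x, ∑ y, v x * v y * K x y = ∑ x, v x * w x := by
    simp_rw [w, mul_sum]; exact sum_congr rfl fun _ _ => sum_congr rfl fun _ _ => by ring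
  have hww : ∑ x, w x ^ 2 = ∑ x, v x * w x := by
    calc ∑ x, w x ^ 2 = ∑ y, ∑ z, v y * v z * ∑ x, K y x * K x z := by
          simp_rw [w, sq, sum_mul_sum, mul_sum]
          rw [sum_comm]; refine sum_congr rfl fun y _ => ?_
          rw [sum_comm]; refine sum_congr rfl fun z _ => sum_congr rfl fun x _ => ?_
          rw [hK x y]; ring
      _ = ∑ x, v x * w x := by
          simp_rw [hKK, w, mul_sum]
          exact sum_congr rfl fun _ _ => sum_congr rfl fun _ _ => by ring
  have := sum_nonneg fun x (_ : x ∈ univ) => sq_nonneg (v x - w x)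
  simp only [sub_sq, sum_add_distrib, sum_sub_distrib, mul_assoc, ← mul_sum] at this
  linarith

section Perm
variable {β : Type*} [DecidableEq β]

lemma exists_perm_apply_eq_apply_eq {a b a' b' : β} (h : a = b ↔ a' = b') :
    ∃ s : Equiv.Perm β, s a = a' ∧ s b = b' := by
  by_cases hab : a = b
  · subst hab
    exact ⟨Equiv.swap a a', Equiv.swap_apply_left _ _,
      by rw [← h.mp rfl, Equiv.swap_apply_left]⟩
  · exact MulAction.is_two_pretransitive_iff.mp (Equiv.Perm.isMultiplyPretransitive β 2) hab
      (mt h.mpr hab)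

variable [Fintype β]

noncomputable def permPairCount (u w a b : β) : ℝ :=
  ∑ g : Equiv.Perm β, (if g u = a then 1 else 0) * (if g w = b then 1 else 0)

lemma permPairCount_congr (u w : β) {a b a' b' : β} (h : a = b ↔ a' = b') :
    permPairCount u w a b = permPairCount u w a' b' := by
  obtain ⟨s, rfl, rfl⟩ := exists_perm_apply_eq_apply_eq h
  exact Fintype.sum_equiv (Equiv.mulLeft s) _ _ fun g => by simp [Equiv.Perm.mul_apply]

lemma sum_permPairCount_self (u w : β) :
    ∑ a, permPairCount u w a a = Fintype.card (Equiv.Perm β) * if u = w then 1 else 0 := by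
  simp only [permPairCount]
  rw [sum_comm]
  simp [sum_ite_eq, eq_comm (a := u)]

lemma sum_sum_permPairCount (u w : β) :
    ∑ a, ∑ b, permPairCount u w a b = Fintype.card (Equiv.Perm β) := by
  simp only [permPairCount]
  rw [sum_congr rfl fun a _ => sum_comm, sum_comm]
  simp

lemma card_mul_permPairCount_self (u w a : β) :
    Fintype.card β * permPairCount u w a a =
      Fintype.card (Equiv.Perm β) * if u = w then 1 else 0 := by
  rw [← sum_permPairCount_self, sum_congr rfl fun a' _ => permPairCount_congr u w (a := a')
    (b := a') (a' := a) (b' := a) (by simp)]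
  simp

lemma card_mul_card_sub_one_mul_permPairCount {a b : β} (u w : β) (hab : a ≠ b) :
    Fintype.card β * (Fintype.card β - 1) * permPairCount u w a b =
      Fintype.card (Equiv.Perm β) * (1 - if u = w then 1 else 0) := by
  have hrow : ∀ a', ∑ b', permPairCount u w a' b' =
      permPairCount u w a' a' + (Fintype.card β - 1) * permPairCount u w a b := by
    intro a'
    rw [← add_sum_erase univ _ (mem_univ a'), sum_congr rfl fun b' hb' =>
      permPairCount_congr u w (a' := a) (b' := b) (by simp [hab, (ne_of_mem_erase hb').symm]),
      sum_const, card_erase_of_mem (mem_univ _), card_univ, nsmul_eq_mul,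
      Nat.cast_sub (Fintype.card_pos_iff.mpr ⟨a⟩), Nat.cast_one]
  have htotal := sum_sum_permPairCount (β := β) u w
  simp only [hrow, sum_add_distrib, sum_permPairCount_self, sum_const, card_univ,
    nsmul_eq_mul] at htotal
  linear_combination htotal

lemma expect_perm_indicator_mul_indicator [Nontrivial β] (u w a b : β) :
    𝔼 g : Equiv.Perm β, (if g u = a then (1 : ℝ) else 0) * (if g w = b then 1 else 0) =
      1 / (Fintype.card β : ℝ) ^ 2 +
        centeredDelta u w * centeredDelta a b / (Fintype.card β - 1) := by
  have hn : (1 : ℝ) < Fintype.card β := by exact_mod_cast Fintype.one_lt_card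
  have hn1 : (Fintype.card β : ℝ) - 1 ≠ 0 := by linarith
  rw [Fintype.expect_eq_sum_div_card]
  change permPairCount u w a b / _ = _
  by_cases hab : a = b
  · subst hab
    have := eq_div_of_mul_eq (by positivity)
      ((mul_comm _ _).trans (card_mul_permPairCount_self u w a))
    simp only [centeredDelta, if_true, this]
    split_ifs <;> field_simp <;> ring
  · have := eq_div_of_mul_eq (mul_ne_zero (by positivity) hn1)
      ((mul_comm _ _).trans (card_mul_card_sub_one_mul_permPairCount u w hab))
    simp only [centeredDelta, if_neg hab, this]
    split_ifs <;> field_simp <;> ring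

end Perm

lemma expect_pi_fin_succ {α : Type*} [Fintype α] {k : ℕ} (f : (Fin (k + 1) → α) → ℝ) :
    𝔼 σ, f σ = 𝔼 g, 𝔼 τ : Fin k → α, f (Fin.cons g τ) := by
  rw [← expect_product', univ_product_univ]
  exact (Fintype.expect_equiv (Fin.consEquiv fun _ => α) _ _ fun _ => rfl).symm

section AddCommGroup
variable {G : Type*} [AddCommGroup G] [Fintype G] [DecidableEq G]

lemma indicator_add_eq_sum (u v s : G) :
    (if u + v = s then (1 : ℝ) else 0) =
      ∑ a, (if u = a then (1 : ℝ) else 0) * (if v = s - a then 1 else 0) := by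
  simp only [boole_mul, sum_ite_eq, mem_univ, if_true, eq_sub_iff_add_eq']

lemma centeredDelta_sub_sub (s t a : G) : centeredDelta (s - a) (t - a) = centeredDelta s t := by
  simp [centeredDelta]

lemma sum_centeredDelta_sub_right (c t : G) : ∑ b, centeredDelta c (t - b) = 0 := by
  rw [Fintype.sum_equiv (Equiv.subLeft t) (fun b => centeredDelta c (t - b)) (centeredDelta c)
    fun _ => rfl, sum_centeredDelta_right]

lemma sum_sum_centeredDelta_mul_centeredDelta_sub (s t : G) :
    ∑ a, ∑ b, centeredDelta a b * centeredDelta (s - a) (t - b) =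
      Fintype.card G * centeredDelta s t := by
  have hsplit : ∀ a b, centeredDelta a b * centeredDelta (s - a) (t - b) =
      (if a = b then centeredDelta (s - a) (t - b) else 0) -
        (Fintype.card G : ℝ)⁻¹ * centeredDelta (s - a) (t - b) := by
    intro a b
    show ((if a = b then 1 else 0) - _) * _ = _
    split_ifs <;> ring
  simp only [hsplit, sum_sub_distrib, sum_ite_eq, mem_univ, if_true, ← mul_sum,
    sum_centeredDelta_sub_right, mul_zero, sub_zero, centeredDelta_sub_sub,
    sum_const, card_univ, nsmul_eq_mul]

lemma sum_sum_uniform_add_centeredDelta_mul (c d : ℝ) (s t : G) :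
    ∑ a, ∑ b, (1 / (Fintype.card G : ℝ) ^ 2 + c * centeredDelta a b) *
        (1 / (Fintype.card G : ℝ) ^ 2 + d * centeredDelta (s - a) (t - b)) =
      1 / (Fintype.card G : ℝ) ^ 2 + c * d * Fintype.card G * centeredDelta s t := by
  set n : ℝ := (Fintype.card G : ℝ)
  have hn : n ≠ 0 := by positivity
  have hexpand : ∀ a b, (1 / n ^ 2 + c * centeredDelta a b) *
      (1 / n ^ 2 + d * centeredDelta (s - a) (t - b)) =
        1 / n ^ 4 + d / n ^ 2 * centeredDelta (s - a) (t - b) +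
          c / n ^ 2 * centeredDelta a b +
          c * d * (centeredDelta a b * centeredDelta (s - a) (t - b)) := by
    intro a b; ring
  simp_rw [hexpand, sum_add_distrib, ← mul_sum, sum_centeredDelta_right,
    sum_centeredDelta_sub_right, sum_sum_centeredDelta_mul_centeredDelta_sub, sum_const,
    card_univ, nsmul_eq_mul]
  field_simp
  ring

theorem expect_indicator_sum_mul_indicator_sum [Nontrivial G] (k : ℕ) (x y : Fin (k + 1) → G)
    (s t : G) :
    𝔼 σ : Fin (k + 1) → Equiv.Perm G,
        (if ∑ i, σ i (x i) = s then (1 : ℝ) else 0) * (if ∑ i, σ i (y i) = t then 1 else 0) =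
      1 / (Fintype.card G : ℝ) ^ 2 + (Fintype.card G : ℝ) ^ k / (Fintype.card G - 1) ^ (k + 1) *
        centeredDelta s t * ∏ i, centeredDelta (x i) (y i) := by
  induction k generalizing s t with
  | zero =>
    rw [expect_pi_fin_succ]
    simp only [Fin.sum_univ_succ, Fin.sum_univ_zero, add_zero, Fin.prod_univ_succ,
      Fin.prod_univ_zero, mul_one, Fin.cons_zero, Fintype.expect_const,
      expect_perm_indicator_mul_indicator]
    ring
  | succ k ih =>
    -- Conditioning on `σ 0` convolves the one-permutation law with the law of the other `k + 1`.
    set n : ℝ := (Fintype.card G : ℝ)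
    calc _ = 𝔼 g : Equiv.Perm G, 𝔼 τ : Fin (k + 1) → Equiv.Perm G, ∑ a, ∑ b,
          ((if g (x 0) = a then (1 : ℝ) else 0) * (if g (y 0) = b then 1 else 0)) *
            ((if ∑ i, τ i (x i.succ) = s - a then 1 else 0) *
              (if ∑ i, τ i (y i.succ) = t - b then 1 else 0)) := by
          rw [expect_pi_fin_succ]
          simp only [Fin.sum_univ_succ (n := k + 1), Fin.cons_zero, Fin.cons_succ,
            indicator_add_eq_sum, sum_mul_sum]
          exact expect_congr rfl fun g _ => expect_congr rfl fun τ _ =>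
            sum_congr rfl fun a _ => sum_congr rfl fun b _ => mul_mul_mul_comm _ _ _ _
      _ = ∑ a, ∑ b,
          (𝔼 g : Equiv.Perm G,
            (if g (x 0) = a then (1 : ℝ) else 0) * (if g (y 0) = b then 1 else 0)) *
          𝔼 τ : Fin (k + 1) → Equiv.Perm G,
            (if ∑ i, τ i (x i.succ) = s - a then (1 : ℝ) else 0) *
              (if ∑ i, τ i (y i.succ) = t - b then 1 else 0) := by
          simp only [expect_sum_comm, Fintype.expect_mul_expect]
      _ = ∑ a, ∑ b, (1 / n ^ 2 + centeredDelta (x 0) (y 0) / (n - 1) * centeredDelta a b) *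
          (1 / n ^ 2 + n ^ k / (n - 1) ^ (k + 1) *
            (∏ i : Fin (k + 1), centeredDelta (x i.succ) (y i.succ)) *
              centeredDelta (s - a) (t - b)) := by
          refine sum_congr rfl fun a _ => sum_congr rfl fun b _ => ?_
          rw [expect_perm_indicator_mul_indicator, ih]
          ring
      _ = _ := by
          rw [sum_sum_uniform_add_centeredDelta_mul, Fin.prod_univ_succ (n := k + 1)]
          generalize n - 1 = d
          ring

end AddCommGroup

lemma expect_sq_sum_mul {Ω α : Type*} [Fintype Ω] [Fintype α] (f : Ω → α → ℝ) (v : α → ℝ) :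
    𝔼 ω, (∑ x, f ω x * v x) ^ 2 = ∑ x, ∑ y, v x * v y * 𝔼 ω, f ω x * f ω y := by
  simp_rw [sq, sum_mul_sum, expect_sum_comm, mul_expect]
  exact sum_congr rfl fun x _ => sum_congr rfl fun y _ => expect_congr rfl fun ω _ => by ring

lemma sum_sum_mul_mul_const_add_mul {α : Type*} [Fintype α] {v : α → ℝ} (hv : ∑ x, v x = 0)
    (a b : ℝ) (K : α → α → ℝ) :
    ∑ x, ∑ y, v x * v y * (a + b * K x y) = b * ∑ x, ∑ y, v x * v y * K x y := by
  simp only [mul_add, sum_add_distrib, ← sum_mul, ← mul_sum, hv, mul_zero, zero_mul, zero_add,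
    mul_left_comm _ b]

lemma pow_div_pow_succ_mul_one_sub_inv_nonneg {n : ℝ} (hn : 1 < n) (k : ℕ) :
    0 ≤ n ^ k / (n - 1) ^ (k + 1) * (1 - n⁻¹) := by
  have : n⁻¹ < 1 := inv_lt_one_of_one_lt₀ hn
  have : 0 < n - 1 := by linarith
  positivity

lemma pow_div_pow_succ_mul_one_sub_inv_le {n : ℝ} (hn : 1 < n) (k : ℕ) :
    n ^ k / (n - 1) ^ (k + 1) * (1 - n⁻¹) ≤ 1 / n * Real.exp (k / (n - 1)) := by
  have h1 : 0 < n - 1 := by linarith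
  have hbase : n / (n - 1) ≤ Real.exp (1 / (n - 1)) := by
    calc n / (n - 1) = 1 / (n - 1) + 1 := by field_simp; ring
      _ ≤ _ := Real.add_one_le_exp _
  calc n ^ k / (n - 1) ^ (k + 1) * (1 - n⁻¹) = 1 / n * (n / (n - 1)) ^ k := by
        rw [div_pow]; field_simp; ring
    _ ≤ 1 / n * Real.exp (1 / (n - 1)) ^ k := by gcongr
    _ = 1 / n * Real.exp (k / (n - 1)) := by rw [← Real.exp_nat_mul]; ring_nf

theorem stmt10_general (p m : ℕ) [NeZero p] (hp : 2 ≤ p) (hm : 1 ≤ m)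
    (v : (Fin m → ZMod p) → ℝ)
    (hnorm : ∑ x, (v x) ^ 2 = 1)
    (hperp : ∀ (i : Fin m) (a : ZMod p),
      ∑ x ∈ Finset.univ.filter (fun x : Fin m → ZMod p => x i = a), v x = 0) :
    (∑ σ : Fin m → Equiv.Perm (ZMod p),
        (∑ x, (if (∑ i, σ i (x i)) = 0 then (1 : ℝ) else 0) * v x) ^ 2) /
      (Fintype.card (Fin m → Equiv.Perm (ZMod p)) : ℝ) ≤
    (1 / (p : ℝ)) * Real.exp (((m : ℝ) - 1) / ((p : ℝ) - 1)) := by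
  obtain ⟨k, rfl⟩ : ∃ k, m = k + 1 := ⟨m - 1, by omega⟩
  have : Fact (1 < p) := ⟨hp⟩
  have hsum : ∑ x, v x = 0 := by
    rw [← sum_fiberwise univ (fun x => x 0) v]
    exact sum_eq_zero fun a _ => hperp 0 a
  have hproj : ∑ x, ∑ y, v x * v y * ∏ i, centeredDelta (x i) (y i) ≤ 1 :=
    hnorm ▸ sum_sum_mul_mul_le_sum_sq _ (fun x y => by simp only [centeredDelta_comm])
      sum_prod_centeredDelta_mul_prod_centeredDelta v
  have hp1 : (1 : ℝ) < p := by exact_mod_cast hp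
  rw [← Fintype.expect_eq_sum_div_card, expect_sq_sum_mul]
  simp only [expect_indicator_sum_mul_indicator_sum, centeredDelta_self, ZMod.card]
  rw [sum_sum_mul_mul_const_add_mul hsum, Nat.cast_succ, add_sub_cancel_right]
  calc _ ≤ (p : ℝ) ^ k / (p - 1) ^ (k + 1) * (1 - (p : ℝ)⁻¹) :=
        mul_le_of_le_one_right (pow_div_pow_succ_mul_one_sub_inv_nonneg hp1 k) hproj
    _ ≤ _ := pow_div_pow_succ_mul_one_sub_inv_le hp1 k

/-- For any unit vector `v` on `[p]^m` orthogonal to the span of the slice indicator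
vectors, the expected squared inner product with the modular-addition indicator over
i.i.d. uniform permutations is at most `(1/p)·exp((m−1)/(p−1))`. -/
theorem stmt10 (p m : ℕ) [NeZero p] (hp : 2 ≤ p) (hm : 1 ≤ m) (hmp : m < p)
    (v : (Fin m → ZMod p) → ℝ)
    (hnorm : ∑ x, (v x) ^ 2 = 1)
    (hperp : ∀ (i : Fin m) (a : ZMod p),
      ∑ x ∈ Finset.univ.filter (fun x : Fin m → ZMod p => x i = a), v x = 0) :
    (∑ σ : Fin m → Equiv.Perm (ZMod p),
        (∑ x, (if (∑ i, σ i (x i)) = 0 then (1 : ℝ) else 0) * v x) ^ 2) /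
      (Fintype.card (Fin m → Equiv.Perm (ZMod p)) : ℝ) ≤
    (1 / (p : ℝ)) * Real.exp (((m : ℝ) - 1) / ((p : ℝ) - 1)) :=
  stmt10_general p m hp hm v hnorm hperp
end

section
/- Fix integers p ≥ 2, 1 ≤ m < p, and n ≥ 1. Let D be the uniform distribution over the function class H = { Ψ(x) = 1(Σ_{i=1}^m σ_i(x_i) ≡ 0 mod p) : σ_1,...,σ_m ∈ S_p }, and let Σ_D(x,x') = E_{Ψ∼D}[Ψ(x)Ψ(x')] be the corresponding p^m × p^m covariance matrix. Then the sum of the n largest eigenvalues of Σ_D is at most p^{m−2} + (n/p)·exp((m−1)/(p−1)). -/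
open Finset Matrix
open scoped BigOperators

/-!
Under a uniformly random permutation `τ` of `G = ZMod p`, the pair `(τ u, τ v)` is uniform on the
diagonal of `G × G` if `u = v` and uniform off it otherwise. Both laws are signed mixtures
`(1 - c) • unif (G × G) + c • unif (diagonal)`, and convolving two such mixtures multiplies the
coefficients, because `unif (G × G)` absorbs everything and `unif (diagonal)` is idempotent. Over
the `m` coordinates this gives `Σ_D = p⁻² J + (p - 1) p⁻² (p / (p - 1))ᵐ R` with `J` the all-ones
matrix and `R` the `m`-th tensor power of the projection `I - J / p`. Since `0 ≤ R ≤ I`, the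
Rayleigh quotients of orthonormal eigenvectors, together with Bessel's inequality for the vector
`1`, bound any `n` eigenvalues by `p^(m-2) + n (p - 1) p⁻² (p / (p - 1))ᵐ`, and
`(p / (p - 1))^(m-1) ≤ exp ((m - 1) / (p - 1))`.
-/

section MixedLaw

variable {G K T T' : Type*} [AddCommGroup G] [Fintype G] [AddCommGroup K] [Fintype K]
  [Fintype T] [Fintype T']

/-- The uniform law on `T`, pushed forward by `δ`, is the signed mixture
`(1 - c) • unif G + c • φ_* (unif K)`. -/
def HasMixedLaw (φ : K →+ G) (δ : T → G) (c : ℝ) : Prop :=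
  ∀ g : G → ℝ, 𝔼 τ, g (δ τ) = (1 - c) * 𝔼 a, g a + c * 𝔼 k, g (φ k)

theorem HasMixedLaw.comp_equiv {φ : K →+ G} {δ : T → G} {c : ℝ} (h : HasMixedLaw φ δ c)
    (e : T' ≃ T) : HasMixedLaw φ (δ ∘ e) c := fun g => by
  rw [← h g]
  exact Fintype.expect_equiv e _ _ fun _ => rfl

theorem HasMixedLaw.add [Nonempty T] [Nonempty T'] {φ : K →+ G} {δ : T → G} {δ' : T' → G}
    {c c' : ℝ} (h : HasMixedLaw φ δ c) (h' : HasMixedLaw φ δ' c') :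
    HasMixedLaw φ (fun q : T × T' => δ q.1 + δ' q.2) (c * c') := by
  intro g
  have translate_G (b : G) : 𝔼 a, g (b + a) = 𝔼 a, g a :=
    Fintype.expect_equiv (Equiv.addLeft b) _ _ fun _ => rfl
  have translate_K (l : K) : 𝔼 k, g (φ l + φ k) = 𝔼 k, g (φ k) :=
    Fintype.expect_equiv (Equiv.addLeft l) _ _ fun _ => by simp
  calc 𝔼 q : T × T', g (δ q.1 + δ' q.2)
      = 𝔼 τ, ((1 - c') * 𝔼 a, g (δ τ + a) + c' * 𝔼 k, g (δ τ + φ k)) := by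
        rw [← univ_product_univ, expect_product]
        exact expect_congr rfl fun τ _ => h' (fun b => g (δ τ + b))
    _ = (1 - c') * 𝔼 a, g a + c' * 𝔼 k, 𝔼 τ, g (φ k + δ τ) := by
        rw [expect_add_distrib, ← mul_expect, ← mul_expect,
          expect_comm _ _ fun τ k => g (δ τ + φ k)]
        simp_rw [translate_G, add_comm (δ _), Fintype.expect_const]
    _ = (1 - c') * 𝔼 a, g a + c' * 𝔼 k, ((1 - c) * 𝔼 a, g a + c * 𝔼 l, g (φ k + φ l)) := by
        simp_rw [fun k => h (fun b => g (φ k + b)), translate_G]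
    _ = (1 - c * c') * 𝔼 a, g a + c * c' * 𝔼 k, g (φ k) := by
        simp_rw [translate_K, Fintype.expect_const]
        ring

theorem HasMixedLaw.sum_fin [Nonempty T] {φ : K →+ G} :
    ∀ {m : ℕ} {δ : Fin (m + 1) → T → G} {c : Fin (m + 1) → ℝ},
      (∀ i, HasMixedLaw φ (δ i) (c i)) →
        HasMixedLaw φ (fun σ : Fin (m + 1) → T => ∑ i, δ i (σ i)) (∏ i, c i)
  | 0, δ, c, h => by
    simpa [Function.comp_def] using (h 0).comp_equiv (Equiv.funUnique (Fin 1) T)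
  | m + 1, δ, c, h => by
    have := ((h 0).add (sum_fin fun i => h i.succ)).comp_equiv (Fin.consEquiv fun _ => T).symm
    simpa [Fin.sum_univ_succ, Fin.prod_univ_succ, Function.comp_def, Fin.tail] using this

end MixedLaw

namespace Equiv.Perm

variable {α : Type*} [DecidableEq α]

theorem exists_apply_eq_and_apply_eq {u v a b : α} (huv : u ≠ v) (hab : a ≠ b) :
    ∃ π : Perm α, π u = a ∧ π v = b := by
  have hw : swap u a v ≠ a := fun h =>
    huv ((swap u a).injective (h.trans (swap_apply_left u a).symm)).symm
  refine ⟨(swap u a).trans (swap (swap u a v) b), ?_, ?_⟩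
  · simp only [trans_apply, swap_apply_left]
    exact swap_apply_of_ne_of_ne hw.symm hab
  · simp only [trans_apply, swap_apply_left]

variable [Fintype α]

theorem expect_comp_apply (f : α → ℝ) (u : α) : 𝔼 τ : Perm α, f (τ u) = 𝔼 a, f a := by
  have : Nonempty α := ⟨u⟩
  have transitive (a : α) : 𝔼 τ : Perm α, f (τ a) = 𝔼 τ : Perm α, f (τ u) :=
    Fintype.expect_equiv (Equiv.mulRight (swap u a)) _ _ fun τ => by simp
  calc 𝔼 τ : Perm α, f (τ u) = 𝔼 a, 𝔼 τ : Perm α, f (τ a) := by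
        simp_rw [transitive, Fintype.expect_const]
    _ = 𝔼 τ : Perm α, 𝔼 a, f (τ a) := expect_comm _ _ _
    _ = 𝔼 a, f a := by
      simp_rw [fun τ : Perm α => Fintype.expect_equiv τ (fun a => f (τ a)) f fun _ => rfl]
      exact Fintype.expect_const _

theorem card_mul_card_sub_one_mul_expect_comp_pair (F : α → α → ℝ) {u v : α} (huv : u ≠ v) :
    (Fintype.card α * (Fintype.card α - 1) : ℝ) * 𝔼 τ : Perm α, F (τ u) (τ v) =
      ∑ a, ∑ b, F a b - ∑ a, F a a := by
  have : Nonempty α := ⟨u⟩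
  set E : α → α → ℝ := fun a b => 𝔼 τ : Perm α, F (τ a) (τ b)
  have transitive {a b : α} (hab : a ≠ b) : E a b = E u v := by
    obtain ⟨π, rfl, rfl⟩ := exists_apply_eq_and_apply_eq huv hab
    exact Fintype.expect_equiv (Equiv.mulRight π) _ _ fun τ => rfl
  have row (a : α) : ∑ b, E a b = E a a + (Fintype.card α - 1) * E u v := by
    rw [← add_sum_erase _ _ (mem_univ a),
      sum_congr rfl fun b hb => transitive (ne_of_mem_erase hb).symm,
      sum_const, card_erase_of_mem (mem_univ a), card_univ, nsmul_eq_mul,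
      Nat.cast_sub Fintype.card_pos, Nat.cast_one]
  have total : ∑ a, ∑ b, E a b = ∑ a, ∑ b, F a b := by
    have invariant (τ : Perm α) : ∑ a, ∑ b, F (τ a) (τ b) = ∑ a, ∑ b, F a b := by
      rw [Equiv.sum_comp τ fun a => ∑ b, F a (τ b)]
      exact sum_congr rfl fun a _ => Equiv.sum_comp τ (F a)
    simp only [E, ← expect_sum_comm, invariant, Fintype.expect_const]
  have diagonal : ∑ a, E a a = ∑ a, F a a := by
    simp only [E, ← expect_sum_comm, fun τ : Perm α => Equiv.sum_comp τ fun a => F a a,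
      Fintype.expect_const]
  rw [← total, ← diagonal]
  simp_rw [row, sum_add_distrib, sum_const, card_univ, nsmul_eq_mul]
  ring

end Equiv.Perm

namespace Matrix

variable {α R : Type*} [CommSemiring R]

def tensorPow (ι : Type*) [Fintype ι] (A : Matrix α α R) : Matrix (ι → α) (ι → α) R :=
  of fun x y => ∏ i, A (x i) (y i)

theorem tensorPow_mul [Fintype α] {ι : Type*} [Fintype ι] [DecidableEq ι] (A B : Matrix α α R) :
    tensorPow ι A * tensorPow ι B = tensorPow ι (A * B) := by
  ext x z
  simp only [tensorPow, mul_apply, of_apply, ← prod_mul_distrib]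
  rw [prod_univ_sum, Fintype.piFinset_univ]

theorem tensorPow_transpose (ι : Type*) [Fintype ι] (A : Matrix α α R) :
    (tensorPow ι A)ᵀ = tensorPow ι Aᵀ := by
  ext x y
  rfl

theorem dotProduct_mulVec_le_of_isIdempotentElem {n : Type*} [Fintype n] [DecidableEq n]
    {P : Matrix n n ℝ} (hsymm : Pᵀ = P) (hidem : IsIdempotentElem P) (w : n → ℝ) :
    w ⬝ᵥ P *ᵥ w ≤ w ⬝ᵥ w := by
  set Q := 1 - P
  have hQ : Qᵀ * Q = Q := by
    rw [transpose_sub, transpose_one, hsymm]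
    exact hidem.one_sub
  have : w ⬝ᵥ Q *ᵥ w = (Q *ᵥ w) ⬝ᵥ (Q *ᵥ w) := by
    conv_lhs => rw [← hQ, ← mulVec_mulVec, dotProduct_mulVec, vecMul_transpose]
  have hnonneg : 0 ≤ w ⬝ᵥ Q *ᵥ w := this ▸ dotProduct_star_self_nonneg (Q *ᵥ w)
  simpa [Q, sub_mulVec, dotProduct_sub] using hnonneg

theorem dotProduct_smul_vecMulVec_add_smul_mulVec_le {n : Type*} [Fintype n] [DecidableEq n]
    {P : Matrix n n ℝ} (hsymm : Pᵀ = P) (hidem : IsIdempotentElem P) (a : ℝ) {b : ℝ} (hb : 0 ≤ b)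
    (u w : n → ℝ) : w ⬝ᵥ (a • vecMulVec u u + b • P) *ᵥ w ≤ a * (u ⬝ᵥ w) ^ 2 + b * (w ⬝ᵥ w) := by
  simp only [add_mulVec, smul_mulVec, vecMulVec_mulVec, dotProduct_add, dotProduct_smul,
    MulOpposite.smul_eq_mul_unop, MulOpposite.unop_op, smul_eq_mul, dotProduct_comm w u]
  rw [← sq]
  gcongr
  exact dotProduct_mulVec_le_of_isIdempotentElem hsymm hidem w

theorem IsHermitian.sum_eigenvalues_le {ι : Type*} [Fintype ι] [DecidableEq ι]
    {M : Matrix ι ι ℝ} (hM : M.IsHermitian) {u : ι → ℝ} {a b : ℝ} (ha : 0 ≤ a)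
    (hquad : ∀ w, w ⬝ᵥ M *ᵥ w ≤ a * (u ⬝ᵥ w) ^ 2 + b * (w ⬝ᵥ w)) (t : Finset ι) :
    ∑ i ∈ t, hM.eigenvalues i ≤ a * (u ⬝ᵥ u) + b * t.card := by
  set v := hM.eigenvectorBasis
  have inner_eq (i : ι) : inner ℝ (v i) (WithLp.toLp 2 u) = u ⬝ᵥ v i := by
    rw [EuclideanSpace.inner_eq_star_dotProduct, star_trivial]
  have eigenvalue_le (i : ι) : hM.eigenvalues i ≤ a * (u ⬝ᵥ v i) ^ 2 + b := by
    have hunit : ⇑(v i) ⬝ᵥ ⇑(v i) = 1 := by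
      have := real_inner_self_eq_norm_sq (v i)
      rwa [v.orthonormal.1 i, one_pow, EuclideanSpace.inner_eq_star_dotProduct, star_trivial]
        at this
    simpa [hM.eigenvalues_eq i, hunit] using hquad (v i)
  have bessel : ∑ i ∈ t, (u ⬝ᵥ v i) ^ 2 ≤ u ⬝ᵥ u := by
    have := v.orthonormal.sum_inner_products_le (s := t) (x := WithLp.toLp 2 u)
    simp_rw [inner_eq, Real.norm_eq_abs, sq_abs] at this
    rwa [← real_inner_self_eq_norm_sq, EuclideanSpace.inner_toLp_toLp, star_trivial] at this
  calc ∑ i ∈ t, hM.eigenvalues i ≤ ∑ i ∈ t, (a * (u ⬝ᵥ v i) ^ 2 + b) :=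
        sum_le_sum fun i _ => eigenvalue_le i
    _ = a * ∑ i ∈ t, (u ⬝ᵥ v i) ^ 2 + b * t.card := by
      rw [sum_add_distrib, ← mul_sum, sum_const, nsmul_eq_mul, mul_comm b]
    _ ≤ a * (u ⬝ᵥ u) + b * t.card := by gcongr

end Matrix

noncomputable def centering (α : Type*) [Fintype α] [DecidableEq α] : Matrix α α ℝ :=
  Matrix.of fun a b => (if a = b then 1 else 0) - (Fintype.card α : ℝ)⁻¹

section Centering

variable {α : Type*} [Fintype α] [DecidableEq α]

theorem centering_transpose : (centering α)ᵀ = centering α := by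
  ext a b
  simp [centering, eq_comm]

theorem centering_mul_self [Nonempty α] : centering α * centering α = centering α := by
  ext a b
  have : (Fintype.card α : ℝ) ≠ 0 := Nat.cast_ne_zero.2 Fintype.card_ne_zero
  simp only [centering, mul_apply, of_apply, sub_mul, mul_sub, sum_sub_distrib, ite_mul, one_mul,
    zero_mul, mul_ite, mul_one, mul_zero, sum_ite_eq, sum_ite_eq', mem_univ, if_true, sum_const,
    card_univ, nsmul_eq_mul]
  field_simp
  ring

end Centering

theorem hasMixedLaw_perm_apply_pair {G : Type*} [AddCommGroup G] [Fintype G] [DecidableEq G]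
    (hG : 2 ≤ Fintype.card G) (u v : G) :
    HasMixedLaw ((AddMonoidHom.id G).prod (AddMonoidHom.id G)) (fun τ : Equiv.Perm G => (τ u, τ v))
      (Fintype.card G / (Fintype.card G - 1) * centering G u v) := by
  intro g
  have hN : (Fintype.card G : ℝ) - 1 ≠ 0 := by
    have : (2 : ℝ) ≤ Fintype.card G := by exact_mod_cast hG
    linarith
  by_cases huv : u = v
  · subst huv
    have hc : (Fintype.card G : ℝ) / (Fintype.card G - 1) * centering G u u = 1 := by
      simp only [centering, of_apply, if_true]
      field_simp
    rw [hc, sub_self, zero_mul, zero_add, one_mul]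
    exact Equiv.Perm.expect_comp_apply (fun a => g (a, a)) u
  · have key := Equiv.Perm.card_mul_card_sub_one_mul_expect_comp_pair (fun a b => g (a, b)) huv
    rw [Fintype.expect_eq_sum_div_card (ι := G × G), Fintype.expect_eq_sum_div_card (ι := G),
      Fintype.sum_prod_type, Fintype.card_prod, Nat.cast_mul]
    simp only [centering, of_apply, if_neg huv, AddMonoidHom.prod_apply, AddMonoidHom.id_apply]
    field_simp
    linear_combination (Fintype.card G : ℝ) * key

noncomputable def sumZeroCovariance (G : Type*) [AddCommGroup G] [Fintype G] [DecidableEq G]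
    (m : ℕ) : Matrix (Fin m → G) (Fin m → G) ℝ :=
  of fun x x' => 𝔼 σ : Fin m → Equiv.Perm G,
    (if ∑ i, σ i (x i) = 0 then 1 else 0) * (if ∑ i, σ i (x' i) = 0 then 1 else 0)

theorem sumZeroCovariance_eq {G : Type*} [AddCommGroup G] [Fintype G] [DecidableEq G]
    (hG : 2 ≤ Fintype.card G) (m : ℕ) :
    sumZeroCovariance G (m + 1) = ((Fintype.card G : ℝ) ^ 2)⁻¹ • vecMulVec 1 1 +
      (((Fintype.card G : ℝ) - 1) / Fintype.card G ^ 2 *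
        (Fintype.card G / (Fintype.card G - 1)) ^ (m + 1)) •
          tensorPow (Fin (m + 1)) (centering G) := by
  ext x x'
  have hN : (Fintype.card G : ℝ) - 1 ≠ 0 := by
    have : (2 : ℝ) ≤ Fintype.card G := by exact_mod_cast hG
    linarith
  have law := HasMixedLaw.sum_fin fun i => hasMixedLaw_perm_apply_pair hG (x i) (x' i)
  have := law fun q => (if q.1 = 0 then (1 : ℝ) else 0) * (if q.2 = 0 then 1 else 0)
  simp only [Prod.fst_sum, Prod.snd_sum, AddMonoidHom.prod_apply, AddMonoidHom.id_apply] at this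
  have uniform : 𝔼 q : G × G, (if q.1 = 0 then (1 : ℝ) else 0) * (if q.2 = 0 then 1 else 0) =
      ((Fintype.card G : ℝ) ^ 2)⁻¹ := by
    simp [Fintype.expect_eq_sum_div_card, Fintype.sum_prod_type, sq]
  have diagonal : 𝔼 a : G, (if a = 0 then (1 : ℝ) else 0) * (if a = 0 then 1 else 0) =
      (Fintype.card G : ℝ)⁻¹ := by
    simp
  rw [sumZeroCovariance, of_apply, this, uniform, diagonal, prod_mul_distrib, prod_const, card_univ,
    Fintype.card_fin]
  simp only [Matrix.add_apply, Matrix.smul_apply, vecMulVec_apply, Pi.one_apply, tensorPow,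
    of_apply, smul_eq_mul, mul_one]
  field_simp
  ring

theorem sum_eigenvalues_sumZeroCovariance_le {G : Type*} [AddCommGroup G] [Fintype G]
    [DecidableEq G] (hG : 2 ≤ Fintype.card G) (m : ℕ)
    (hM : (sumZeroCovariance G (m + 1)).IsHermitian) (t : Finset (Fin (m + 1) → G)) :
    ∑ x ∈ t, hM.eigenvalues x ≤ (Fintype.card G : ℝ) ^ (m + 1) / Fintype.card G ^ 2 +
      ((Fintype.card G : ℝ) - 1) / Fintype.card G ^ 2 *
        (Fintype.card G / (Fintype.card G - 1)) ^ (m + 1) * t.card := by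
  have hb : 0 ≤ ((Fintype.card G : ℝ) - 1) / Fintype.card G ^ 2 *
      (Fintype.card G / (Fintype.card G - 1)) ^ (m + 1) := by
    have : (2 : ℝ) ≤ Fintype.card G := by exact_mod_cast hG
    have : (0 : ℝ) ≤ Fintype.card G - 1 := by linarith
    positivity
  have := hM.sum_eigenvalues_le (by positivity) (fun w => sumZeroCovariance_eq hG m ▸
    dotProduct_smul_vecMulVec_add_smul_mulVec_le
      (by rw [tensorPow_transpose, centering_transpose])
      (by rw [IsIdempotentElem, tensorPow_mul, centering_mul_self]) _ hb 1 w) t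
  rwa [one_dotProduct_one, Fintype.card_fun, Fintype.card_fin, Nat.cast_pow, ← div_eq_inv_mul]
    at this

theorem sub_one_div_sq_mul_div_sub_one_pow_le {N : ℝ} (hN : 1 < N) (m : ℕ) :
    (N - 1) / N ^ 2 * (N / (N - 1)) ^ (m + 1) ≤ N⁻¹ * Real.exp (m / (N - 1)) := by
  have hN1 : 0 < N - 1 := sub_pos.2 hN
  have hsplit : (N - 1) / N ^ 2 * (N / (N - 1)) ^ (m + 1) = N⁻¹ * (1 / (N - 1) + 1) ^ m := by
    rw [pow_succ (N / (N - 1)), div_add_one hN1.ne', add_sub_cancel]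
    field_simp
  rw [hsplit, div_eq_mul_one_div (m : ℝ), Real.exp_nat_mul]
  gcongr
  exact Real.add_one_le_exp _

theorem stmt11_general (p m n : ℕ) [NeZero p] (hp : 2 ≤ p) (hm : 1 ≤ m)
    (Sig : Matrix (Fin m → ZMod p) (Fin m → ZMod p) ℝ)
    (hdef : ∀ x x', Sig x x' =
      (∑ σ : Fin m → Equiv.Perm (ZMod p),
          (if (∑ i, σ i (x i)) = 0 then (1 : ℝ) else 0) *
          (if (∑ i, σ i (x' i)) = 0 then (1 : ℝ) else 0)) /
        (Fintype.card (Fin m → Equiv.Perm (ZMod p)) : ℝ))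
    (hherm : Sig.IsHermitian)
    (t : Finset (Fin m → ZMod p)) (ht : t.card ≤ n) :
    ∑ x ∈ t, hherm.eigenvalues x ≤
      (p : ℝ) ^ ((m : ℝ) - 2) + ((n : ℝ) / p) * Real.exp (((m : ℝ) - 1) / ((p : ℝ) - 1)) := by
  obtain ⟨k, rfl⟩ : ∃ k, m = k + 1 := ⟨m - 1, by omega⟩
  have hSig : Sig = sumZeroCovariance (ZMod p) (k + 1) := by
    ext x x'
    rw [hdef, ← Fintype.expect_eq_sum_div_card]
    rfl
  subst hSig
  calc ∑ x ∈ t, hherm.eigenvalues x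
      ≤ (p : ℝ) ^ (k + 1) / p ^ 2 + (p - 1) / p ^ 2 * (p / (p - 1)) ^ (k + 1) * t.card := by
        simpa only [ZMod.card] using
          sum_eigenvalues_sumZeroCovariance_le (by rwa [ZMod.card]) k hherm t
    _ ≤ (p : ℝ) ^ (k + 1) / p ^ 2 + (p : ℝ)⁻¹ * Real.exp (k / (p - 1)) * n := by
        refine add_le_add le_rfl (mul_le_mul ?_ (by exact_mod_cast ht) (by positivity) ?_)
        · exact sub_one_div_sq_mul_div_sub_one_pow_le (by exact_mod_cast hp) k
        · positivity
    _ = _ := by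
        rw [Real.rpow_sub (by positivity), Real.rpow_natCast, Real.rpow_two]
        push_cast
        ring_nf

/-- The sum of the `n` largest eigenvalues of the second-moment matrix of the
modular-addition function class (uniform over tuples of permutations) is at most
`p^{m−2} + (n/p)·exp((m−1)/(p−1))`. Formulated as: the eigenvalue sum over any set
of at most `n` indices is bounded. -/
theorem stmt11 (p m n : ℕ) [NeZero p] (hp : 2 ≤ p) (hm : 1 ≤ m) (hmp : m < p)
    (hn : 1 ≤ n)
    (Sig : Matrix (Fin m → ZMod p) (Fin m → ZMod p) ℝ)
    (hdef : ∀ x x', Sig x x' =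
      (∑ σ : Fin m → Equiv.Perm (ZMod p),
          (if (∑ i, σ i (x i)) = 0 then (1 : ℝ) else 0) *
          (if (∑ i, σ i (x' i)) = 0 then (1 : ℝ) else 0)) /
        (Fintype.card (Fin m → Equiv.Perm (ZMod p)) : ℝ))
    (hherm : Sig.IsHermitian)
    (t : Finset (Fin m → ZMod p)) (ht : t.card ≤ n) :
    ∑ x ∈ t, hherm.eigenvalues x ≤
      (p : ℝ) ^ ((m : ℝ) - 2) + ((n : ℝ) / p) * Real.exp (((m : ℝ) - 1) / ((p : ℝ) - 1)) :=
  stmt11_general p m n hp hm Sig hdef hherm t ht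
end

section
/- For any p ≥ 2 and any width h ≥ 8p, there exists a parameter θ = (W, V) with W ∈ ℝ^{h×2p}, V ∈ ℝ^{p×h}, and ||θ||_∞ ≤ ⌊h/(8p)⌋^{−1/3}, such that the two-layer quadratic network f(θ; (e_a, e_b)) = V·(W(e_a,e_b))^{⊙2} exactly computes p times the one-hot encoding of a+b mod p: for all a, b, c ∈ [p], e_c^T f(θ; (e_a, e_b)) = p·1(a + b ≡ c mod p). -/
/-!
Expanding `cos (α + β - γ)` by the addition formulas writes it as a sum of four products
`f(α) g(β) h(γ)` of sines and cosines, and each product `x y` with output weight `w` is realised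
by two quadratic units through `w x y = (w/4) (x + y)² - (w/4) (x - y)²`. Taking
`α, β, γ = 2πja/p, 2πjb/p, 2πjc/p` for every frequency `j < p` gives `8p` units, all weights
bounded by `1`, whose output is `∑ⱼ cos (2πj(a + b - c)/p) = p · 1[p ∣ a + b - c]`.
The network is 3-homogeneous in its weights, so `m = ⌊h/(8p)⌋` copies of it scaled by `m^{-1/3}`
compute the same function; the unused units get zero weights.
-/

open Finset Real Function

theorem sum_range_cos_two_pi_mul_div {p : ℕ} (hp : p ≠ 0) (n : ℤ) :
    ∑ j ∈ range p, cos (2 * π * j * n / p) = if (p : ℤ) ∣ n then (p : ℝ) else 0 := by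
  have hζ := Complex.isPrimitiveRoot_exp p hp
  have hcos (j : ℕ) :
      cos (2 * π * j * n / p) = ((Complex.exp (2 * π * Complex.I / p) ^ n) ^ j).re := by
    rw [← Complex.exp_int_mul, ← Complex.exp_nat_mul, ← Complex.exp_ofReal_mul_I_re]
    push_cast
    ring_nf
  simp_rw [hcos, ← Complex.re_sum]
  split_ifs with hdvd
  · simp [(hζ.zpow_eq_one_iff_dvd n).2 hdvd]
  · set z := Complex.exp (2 * π * Complex.I / p) ^ n
    have hzp : z ^ p = 1 := by
      rw [← zpow_natCast, ← zpow_mul, mul_comm n, zpow_mul, zpow_natCast,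
        hζ.pow_eq_one, one_zpow]
    rw [geom_sum_eq (mt (hζ.zpow_eq_one_iff_dvd n).1 hdvd), hzp]
    simp

theorem int_dvd_add_sub_iff_mod_eq {p a b c : ℕ} (hc : c < p) :
    (p : ℤ) ∣ (a : ℤ) + b - c ↔ (a + b) % p = c := by
  calc (p : ℤ) ∣ (a : ℤ) + b - c ↔ c ≡ a + b [MOD p] := by
        exact_mod_cast (Nat.modEq_iff_dvd (n := p) (a := c) (b := a + b)).symm
    _ ↔ (a + b) % p = c := by rw [Nat.ModEq, Nat.mod_eq_of_lt hc, eq_comm]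

theorem Function.Injective.sum_extend_zero {κ κ' M : Type*} [Fintype κ] [Fintype κ']
    [AddCommMonoid M] {e : κ → κ'} (he : Injective e) (g : κ → M) :
    ∑ k', extend e g 0 k' = ∑ k, g k := by
  classical
  rw [← Finset.sum_subset (subset_univ (univ.map ⟨e, he⟩))]
  · simp [he.extend_apply]
  · intro k' _ hk'
    exact extend_apply' _ _ _ (by simpa using hk')

theorem abs_extend_zero_le {κ κ' : Type*} {e : κ → κ'} (he : Injective e) {f : κ → ℝ} {B : ℝ}
    (hB : 0 ≤ B) (hf : ∀ k, |f k| ≤ B) (k' : κ') : |extend e f 0 k'| ≤ B := by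
  by_cases hk : ∃ k, e k = k'
  · obtain ⟨k, rfl⟩ := hk
    rw [he.extend_apply]
    exact hf k
  · simpa [extend_apply' _ _ _ hk] using hB

theorem rpow_neg_one_third_pow_three {x : ℝ} (hx : 0 ≤ x) : (x ^ (-(1 / 3 : ℝ))) ^ 3 = x⁻¹ := by
  rw [← Real.rpow_natCast, ← Real.rpow_mul hx]
  norm_num [Real.rpow_neg_one]

/-- The network `V (W x)^{⊙2}` with hidden units `κ`, at the input `x = e_i + e_j`, where the
first layer gives the column sum `W k i + W k j`. -/
def quadNet {κ ι ο : Type*} [Fintype κ] (W : Matrix κ ι ℝ) (V : Matrix ο κ ℝ) (i j : ι) (o : ο) :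
    ℝ :=
  ∑ k, V o k * (W k i + W k j) ^ 2

section Width

variable {κ ι ο : Type*} [Fintype κ]

theorem quadNet_smul (s : ℝ) (W : Matrix κ ι ℝ) (V : Matrix ο κ ℝ) (i j : ι) (o : ο) :
    quadNet (fun k i => s * W k i) (fun o k => s * V o k) i j o = s ^ 3 * quadNet W V i j o := by
  simp only [quadNet, Finset.mul_sum]
  exact Finset.sum_congr rfl fun _ _ => by ring

theorem quadNet_replicate (m : ℕ) (W : Matrix κ ι ℝ) (V : Matrix ο κ ℝ) (i j : ι) (o : ο) :
    quadNet (fun r : Fin m × κ => W r.2) (fun o r => V o r.2) i j o = m * quadNet W V i j o := by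
  simp [quadNet, Fintype.sum_prod_type]

theorem quadNet_extend_zero {κ' : Type*} [Fintype κ'] {e : κ → κ'} (he : Injective e)
    (W : Matrix κ ι ℝ) (V : Matrix ο κ ℝ) (i j : ι) (o : ο) :
    quadNet (fun k' i => extend e (W · i) 0 k') (fun o => extend e (V o) 0) i j o =
      quadNet W V i j o := by
  unfold quadNet
  rw [← he.sum_extend_zero]
  refine Fintype.sum_congr _ _ fun k' => ?_
  by_cases hk : ∃ k, e k = k'
  · obtain ⟨k, rfl⟩ := hk
    simp only [he.extend_apply]
  · simp [extend_apply' _ _ _ hk]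

theorem exists_quadNet_of_card_le (W₀ : Matrix κ ι ℝ) (V₀ : Matrix ο κ ℝ)
    (hW₀ : ∀ k i, |W₀ k i| ≤ 1) (hV₀ : ∀ o k, |V₀ o k| ≤ 1) {m h : ℕ} (hm : m ≠ 0)
    (hmh : m * Fintype.card κ ≤ h) :
    ∃ (W : Matrix (Fin h) ι ℝ) (V : Matrix ο (Fin h) ℝ),
      (∀ k i, |W k i| ≤ (m : ℝ) ^ (-(1 / 3 : ℝ))) ∧
      (∀ o k, |V o k| ≤ (m : ℝ) ^ (-(1 / 3 : ℝ))) ∧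
      ∀ i j o, quadNet W V i j o = quadNet W₀ V₀ i j o := by
  set s : ℝ := (m : ℝ) ^ (-(1 / 3 : ℝ))
  have hs : 0 ≤ s := by positivity
  obtain ⟨e⟩ : Nonempty (Fin m × κ ↪ Fin h) :=
    Function.Embedding.nonempty_of_card_le (by simpa using hmh)
  have habs {x : ℝ} (hx : |x| ≤ 1) : |s * x| ≤ s := by
    rw [abs_mul, abs_of_nonneg hs]
    exact mul_le_of_le_one_right hs hx
  refine ⟨fun k i => extend e (fun r => s * W₀ r.2 i) 0 k,
    fun o => extend e (fun r => s * V₀ o r.2) 0,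
    fun k i => abs_extend_zero_le e.injective hs (fun r => habs (hW₀ r.2 i)) k,
    fun o => abs_extend_zero_le e.injective hs fun r => habs (hV₀ o r.2), fun i j o => ?_⟩
  rw [quadNet_extend_zero e.injective (fun r i => s * W₀ r.2 i) (fun o r => s * V₀ o r.2),
    quadNet_smul s (fun r : Fin m × κ => W₀ r.2) (fun o r => V₀ o r.2), quadNet_replicate,
    ← mul_assoc, rpow_neg_one_third_pow_three (Nat.cast_nonneg m),
    inv_mul_cancel₀ (by exact_mod_cast hm), one_mul]

end Width

noncomputable section

def fourierAngle (p j x : ℕ) : ℝ := 2 * π * j * x / p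

def trigA : Fin 4 → ℝ → ℝ := ![cos, sin, sin, cos]

def trigB : Fin 4 → ℝ → ℝ := ![cos, sin, cos, sin]

def trigC : Fin 4 → ℝ → ℝ := ![cos, fun γ => -cos γ, sin, sin]

def polSign : Fin 2 → ℝ := ![1, -1]

/-- Hidden units of the base network: a frequency `j`, one of the four products of
`cos_add_sub_eq_sum`, and a sign of `sum_polarization`. -/
abbrev BaseUnit (p : ℕ) := Fin p × Fin 4 × Fin 2

def baseW (p : ℕ) : Matrix (BaseUnit p) (Fin (p + p)) ℝ := fun u =>
  Fin.append (fun a : Fin p => trigA u.2.1 (fourierAngle p u.1 a))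
    (fun b : Fin p => polSign u.2.2 * trigB u.2.1 (fourierAngle p u.1 b))

def baseV (p : ℕ) : Matrix (Fin p) (BaseUnit p) ℝ := fun c u =>
  polSign u.2.2 * trigC u.2.1 (fourierAngle p u.1 c) / 4

end

theorem cos_add_sub_eq_sum (α β γ : ℝ) :
    cos (α + β - γ) = ∑ i : Fin 4, trigC i γ * trigA i α * trigB i β := by
  simp only [Fin.sum_univ_four, trigA, trigB, trigC, Matrix.cons_val, Matrix.cons_val_zero,
    Matrix.cons_val_one, cos_sub, cos_add, sin_add]
  ring

theorem sum_polarization (w x y : ℝ) :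
    ∑ σ : Fin 2, polSign σ * w / 4 * (x + polSign σ * y) ^ 2 = w * x * y := by
  simp only [Fin.sum_univ_two, polSign, Matrix.cons_val_zero, Matrix.cons_val_one]
  ring

theorem abs_trig_le_one (i : Fin 4) (x : ℝ) :
    |trigA i x| ≤ 1 ∧ |trigB i x| ≤ 1 ∧ |trigC i x| ≤ 1 := by
  fin_cases i <;> simp [trigA, trigB, trigC, abs_cos_le_one, abs_sin_le_one]

theorem abs_polSign (σ : Fin 2) : |polSign σ| = 1 := by
  fin_cases σ <;> simp [polSign]

theorem abs_baseW_le_one (p : ℕ) (u : BaseUnit p) (x : Fin (p + p)) : |baseW p u x| ≤ 1 := by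
  induction x using Fin.addCases with
  | left a =>
    rw [baseW, Fin.append_left]
    exact (abs_trig_le_one _ _).1
  | right b =>
    rw [baseW, Fin.append_right, abs_mul, abs_polSign, one_mul]
    exact (abs_trig_le_one _ _).2.1

theorem abs_baseV_le_one (p : ℕ) (c : Fin p) (u : BaseUnit p) : |baseV p c u| ≤ 1 := by
  have hC := (abs_trig_le_one u.2.1 (fourierAngle p u.1 c)).2.2
  rw [baseV, abs_div, abs_mul, abs_polSign, one_mul, abs_of_pos (by norm_num : (0 : ℝ) < 4)]
  linarith

theorem quadNet_base {p : ℕ} (hp : p ≠ 0) (a b c : Fin p) :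
    quadNet (baseW p) (baseV p) (Fin.castAdd p a) (Fin.natAdd p b) c =
      if ((a : ℕ) + (b : ℕ)) % p = (c : ℕ) then (p : ℝ) else 0 := by
  calc quadNet (baseW p) (baseV p) (Fin.castAdd p a) (Fin.natAdd p b) c
      = ∑ j : Fin p, cos (fourierAngle p j a + fourierAngle p j b - fourierAngle p j c) := by
        simp only [quadNet, Fintype.sum_prod_type, cos_add_sub_eq_sum, baseW, baseV,
          Fin.append_left, Fin.append_right, sum_polarization]
    _ = ∑ j ∈ range p, cos (2 * π * j * ((a : ℤ) + b - c : ℤ) / p) := by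
        rw [Fin.sum_univ_eq_sum_range
          (fun j => cos (fourierAngle p j a + fourierAngle p j b - fourierAngle p j c))]
        refine Finset.sum_congr rfl fun j _ => ?_
        simp only [fourierAngle]
        push_cast
        ring_nf
    _ = _ := by
        rw [sum_range_cos_two_pi_mul_div hp]
        exact if_congr (int_dvd_add_sub_iff_mod_eq c.2) rfl rfl

/-- For any `p ≥ 2` and width `h ≥ 8p` there is a two-layer quadratic network with all
weights bounded by `⌊h/(8p)⌋^{-1/3}` in absolute value that exactly computes `p` times
the one-hot encoding of `a + b mod p`. -/
theorem stmt14 (p h : ℕ) (hp : 2 ≤ p) (hh : 8 * p ≤ h) :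
    ∃ (W : Matrix (Fin h) (Fin (p + p)) ℝ) (V : Matrix (Fin p) (Fin h) ℝ),
      (∀ k j, |W k j| ≤ ((h / (8 * p) : ℕ) : ℝ) ^ (-(1 / 3 : ℝ))) ∧
      (∀ c k, |V c k| ≤ ((h / (8 * p) : ℕ) : ℝ) ^ (-(1 / 3 : ℝ))) ∧
      ∀ a b c : Fin p,
        ∑ k, V c k * (W k (Fin.castAdd p a) + W k (Fin.natAdd p b)) ^ 2 =
          if ((a : ℕ) + (b : ℕ)) % p = (c : ℕ) then (p : ℝ) else 0 := by
  have hm : h / (8 * p) ≠ 0 := (Nat.div_pos hh (by omega)).ne'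
  have hwidth : h / (8 * p) * Fintype.card (BaseUnit p) ≤ h := by
    simpa [Fintype.card_prod, mul_comm p] using Nat.div_mul_le_self h (8 * p)
  obtain ⟨W, V, hW, hV, hnet⟩ := exists_quadNet_of_card_le (baseW p) (baseV p)
    (abs_baseW_le_one p) (abs_baseV_le_one p) hm hwidth
  exact ⟨W, V, hW, hV, fun a b c => (hnet _ _ c).trans (quadNet_base (by omega) a b c)⟩
end

section
/- Consider single-hidden-neuron networks (h = 1). For any w ∈ ℝ^{2p} with ||w||_∞ ≤ r and v ∈ ℝ^p with ||v||_∞ ≤ r', the function h(x) = ⟨x'', v·⟨w, x'⟩²⟩ can be written as a sum of four cubes: there exists U ∈ ℝ^{4×3p} with ||U||_∞ ≤ max(r, r') such that for all x ∈ ℝ^{3p} (with x' = x[:2p] and x'' = x[2p:]), ⟨x'', v·⟨w, x'⟩²⟩ = Σ_{i=1}^4 ⟨U_i, x⟩³. -/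
open Finset

/-- A single-hidden-neuron quadratic network output `⟨v, x''⟩·⟨w, x'⟩²` can be written
as a sum of four cubes of linear forms with coefficients bounded by `max r r'`. -/
theorem stmt17 (p : ℕ) (r r' : ℝ) (w : Fin (p + p) → ℝ) (v : Fin p → ℝ)
    (hw : ∀ j, |w j| ≤ r) (hv : ∀ j, |v j| ≤ r') :
    ∃ U : Fin 4 → (Fin (p + p + p) → ℝ),
      (∀ i j, |U i j| ≤ max r r') ∧
      ∀ x : Fin (p + p + p) → ℝ,
        (∑ j, v j * x (Fin.natAdd (p + p) j)) *
            (∑ j, w j * x (Fin.castAdd p j)) ^ 2 =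
          ∑ i, (∑ j, U i j * x j) ^ 3 := by
  set c : ℝ := (2/9 : ℝ) ^ ((1:ℝ)/3) with hc
  have hc0 : (0:ℝ) ≤ c := Real.rpow_nonneg (by norm_num) _
  have hc1 : c ≤ 1 := by
    rw [hc]
    calc (2/9 : ℝ) ^ ((1:ℝ)/3) ≤ 1 ^ ((1:ℝ)/3) :=
          Real.rpow_le_rpow (by norm_num) (by norm_num) (by norm_num)
      _ = 1 := Real.one_rpow _
  have hc3 : c ^ 3 = 2/9 := by
    rw [hc, ← Real.rpow_natCast ((2/9:ℝ) ^ ((1:ℝ)/3)) 3, ← Real.rpow_mul (by norm_num)]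
    norm_num
  set sw : Fin 4 → ℝ := ![1, -1, -(1/2), 1/2] with hsw
  set sv : Fin 4 → ℝ := ![1, 1, -1, -1] with hsv
  refine ⟨fun i => Fin.addCases (fun j => c * sw i * w j) (fun j => c * sv i * v j), ?_, ?_⟩
  · intro i j
    have hsw1 : |sw i| ≤ 1 := by
      fin_cases i <;> simp only [hsw, Matrix.cons_val_zero, Matrix.cons_val_one,
          Matrix.head_cons, Matrix.cons_val_two, Matrix.tail_cons, Matrix.cons_val_three] <;>
        exact abs_le.2 (by norm_num)
    have hsv1 : |sv i| ≤ 1 := by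
      fin_cases i <;> simp only [hsv, Matrix.cons_val_zero, Matrix.cons_val_one,
          Matrix.head_cons, Matrix.cons_val_two, Matrix.tail_cons, Matrix.cons_val_three] <;>
        exact abs_le.2 (by norm_num)
    refine Fin.addCases (motive := fun j =>
        |Fin.addCases (fun j => c * sw i * w j) (fun j => c * sv i * v j) j| ≤ max r r') ?_ ?_ j
    · intro j
      simp only [Fin.addCases_left]
      have hr : (0:ℝ) ≤ r := le_trans (abs_nonneg _) (hw j)
      calc |c * sw i * w j| = c * (|sw i| * |w j|) := by
            rw [abs_mul, abs_mul, abs_of_nonneg hc0, mul_assoc]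
        _ ≤ 1 * (1 * r) := by
            gcongr
            exact hw j
        _ ≤ max r r' := by simp
    · intro j
      simp only [Fin.addCases_right]
      have hr : (0:ℝ) ≤ r' := le_trans (abs_nonneg _) (hv j)
      calc |c * sv i * v j| = c * (|sv i| * |v j|) := by
            rw [abs_mul, abs_mul, abs_of_nonneg hc0, mul_assoc]
        _ ≤ 1 * (1 * r') := by
            gcongr
            exact hv j
        _ ≤ max r r' := by simp
  · intro x
    have hsum : ∀ i : Fin 4,
        (∑ j : Fin (p + p + p),
          Fin.addCases (fun j => c * sw i * w j) (fun j => c * sv i * v j) j * x j)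
        = c * sw i * (∑ j, w j * x (Fin.castAdd p j))
          + c * sv i * (∑ j, v j * x (Fin.natAdd (p+p) j)) := by
      intro i
      rw [Fin.sum_univ_add]
      simp only [Fin.addCases_left, Fin.addCases_right]
      rw [Finset.mul_sum, Finset.mul_sum]
      congr 1 <;> exact Finset.sum_congr rfl (fun j _ => by ring)
    simp only [hsum]
    rw [Fin.sum_univ_four]
    set a := ∑ j, w j * x (Fin.castAdd p j)
    set b := ∑ j, v j * x (Fin.natAdd (p+p) j)
    simp only [hsw, hsv, Matrix.cons_val_zero, Matrix.cons_val_one, Matrix.head_cons,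
      Matrix.cons_val_two, Matrix.tail_cons, Matrix.cons_val_three]
    linear_combination (-(9/2) * a^2 * b) * hc3
end

section
/- Let g: X → ℝ be a predictor for the modular addition regression task, where X = {(e_a, e_b, e_c) : a, b, c ∈ [p]} with target y(a,b,c) = p·1(a+b ≡ c mod p), and D the uniform distribution over X. Then the population misclassification error of the induced classifier φ(e_a, e_b) = argmax_c g((e_a, e_b, e_c)) is at most (2/p)·L(g), where L(g) = E_{(x,y)∼D}[(g(x) − y)²] is the population squared loss. -/
open Finset

/-- The population misclassification error of the argmax classifier induced by a
regression predictor `g` for modular addition is at most `(2/p)` times the population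
squared loss of `g`. -/
theorem stmt19 (p : ℕ) [NeZero p] (hp : 2 ≤ p)
    (g : ZMod p → ZMod p → ZMod p → ℝ)
    (φ : ZMod p → ZMod p → ZMod p)
    (hargmax : ∀ a b c, g a b c ≤ g a b (φ a b)) :
    ((Finset.univ.filter
        (fun ab : ZMod p × ZMod p => φ ab.1 ab.2 ≠ ab.1 + ab.2)).card : ℝ) / (p : ℝ) ^ 2 ≤
      (2 / (p : ℝ)) *
        ((∑ a, ∑ b, ∑ c, (g a b c - (if a + b = c then (p : ℝ) else 0)) ^ 2) / (p : ℝ) ^ 3) := by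
  have hp0 : (0:ℝ) < p := by positivity
  set S := (Finset.univ.filter
        (fun ab : ZMod p × ZMod p => φ ab.1 ab.2 ≠ ab.1 + ab.2)) with hS
  set L := (∑ a, ∑ b, ∑ c, (g a b c - (if a + b = c then (p : ℝ) else 0)) ^ 2) with hL
  -- key pointwise bound
  have key : ∀ ab ∈ S, (p:ℝ)^2 / 2 ≤
      ∑ c, (g ab.1 ab.2 c - (if ab.1 + ab.2 = c then (p : ℝ) else 0)) ^ 2 := by
    rintro ⟨a, b⟩ hab
    have hne : φ a b ≠ a + b := by
      simpa [hS] using (Finset.mem_filter.mp hab).2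
    have hsplit : ∑ c, (g a b c - (if a + b = c then (p : ℝ) else 0)) ^ 2
        = (g a b (a+b) - (p:ℝ))^2 +
          ∑ c ∈ Finset.univ.erase (a+b), (g a b c - (if a + b = c then (p : ℝ) else 0)) ^ 2 := by
      rw [← Finset.add_sum_erase _ _ (Finset.mem_univ (a+b))]
      simp
    have hmem : φ a b ∈ Finset.univ.erase (a+b) := by
      simp [hne]
    have h2 : (g a b (φ a b))^2 ≤
        ∑ c ∈ Finset.univ.erase (a+b), (g a b c - (if a + b = c then (p : ℝ) else 0)) ^ 2 := by
      have := Finset.single_le_sum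
        (f := fun c => (g a b c - (if a + b = c then (p : ℝ) else 0)) ^ 2)
        (fun c _ => sq_nonneg _) hmem
      simpa [Ne.symm hne] using this
    have harg := hargmax a b (a+b)
    rw [hsplit]
    nlinarith [sq_nonneg (g a b (a+b) + g a b (φ a b) - p),
      sq_nonneg (g a b (a+b) - g a b (φ a b))]
  -- sum the bound
  have hsum : (S.card : ℝ) * ((p:ℝ)^2 / 2) ≤ L := by
    calc (S.card : ℝ) * ((p:ℝ)^2 / 2)
        = ∑ _ab ∈ S, (p:ℝ)^2/2 := by rw [Finset.sum_const, nsmul_eq_mul]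
      _ ≤ ∑ ab ∈ S, ∑ c, (g ab.1 ab.2 c - (if ab.1 + ab.2 = c then (p : ℝ) else 0)) ^ 2 :=
          Finset.sum_le_sum key
      _ ≤ ∑ ab : ZMod p × ZMod p, ∑ c,
            (g ab.1 ab.2 c - (if ab.1 + ab.2 = c then (p : ℝ) else 0)) ^ 2 := by
          apply Finset.sum_le_sum_of_subset_of_nonneg (Finset.filter_subset _ _)
          intro i _ _
          exact Finset.sum_nonneg fun c _ => sq_nonneg _
      _ = L := by rw [hL, Fintype.sum_prod_type]
  rw [div_le_iff₀ (by positivity : (0:ℝ) < (p:ℝ)^2)]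
  have heq : 2 / (p:ℝ) * (L / (p:ℝ)^3) * (p:ℝ)^2 = 2 * L / (p:ℝ)^2 := by
    field_simp
  rw [heq, le_div_iff₀ (by positivity : (0:ℝ) < (p:ℝ)^2)]
  nlinarith [hsum]
end
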